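/- arXiv:2308.12185 — 3 statements merged into one kernel-verified Lean document; each statement's English description precedes it below -/
import Mathlib

section
/- Let Γ be a finitely generated group with a free normal subgroup Φ of finite index, and Δ ≤ Γ a finitely generated subgroup. Then for every finite-index normal subgroup U ⊴ Δ there exists a finite-index normal subgroup V ⊴ Γ with V ∩ Δ ≤ U. -/
/-!
Marshall Hall's argument. Let `D = ⟨T⟩` be a finitely generated subgroup of a free group `F` and
`U` a subgroup meeting `D` in a subgroup of finite index. The cosets `dU` (`d ∈ D`), together
with their translates by the elements spelled by suffixes of the reduced words of the generators,
form a finite set `Y` of cosets of `U`. Left translation by a basis letter is a partial bijection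
of `Y`; extending each to a permutation of `Y` gives a permutation representation `ρ` of `F` on a
finite set which agrees with the true action along every word whose suffixes keep the coset inside
`Y`. Hence each `d ∈ D` acts on the cosets `d'U` (`d' ∈ D`) by translation, so an element of
`ker ρ ∩ D` fixes the coset `U` and lies in `U`; and `ker ρ` has finite index.

For the virtually free group `Γ`, Schreier's lemma makes `Δ ∩ Φ` finitely generated, Hall's
argument applies inside `Φ ≅ F`, the resulting finite-index subgroups of `Φ` have finite index in
`Γ`, and intersecting with `Φ` passes from `Δ ∩ Φ` back to `Δ`. The normal core gives normality.
-/

namespace Subgroup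

variable {G H : Type*} [Group G] [Group H]

theorem FG.map {D : Subgroup G} (hD : D.FG) (f : G →* H) : (D.map f).FG := by
  classical
  obtain ⟨T, rfl⟩ := hD
  exact ⟨T.image f, by rw [Finset.coe_image, MonoidHom.map_closure]⟩

theorem FG.subgroupOf_of_finiteIndex {D : Subgroup G} (hD : D.FG) (K : Subgroup G)
    [K.FiniteIndex] : (D.subgroupOf K).FG := by
  -- Schreier's lemma (`Subgroup.fg_of_index_ne_zero`) makes `K.subgroupOf D` finitely generated.
  have : Group.FG D := (Group.fg_iff_subgroup_fg D).2 hD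
  let swap : K.subgroupOf D →* D.subgroupOf K :=
    { toFun := fun x => ⟨⟨x.1.1, x.2⟩, x.1.2⟩
      map_one' := rfl
      map_mul' := fun _ _ => rfl }
  have hswap : Function.Surjective swap := fun x => ⟨⟨⟨x.1.1, x.2⟩, x.1.2⟩, rfl⟩
  exact (Group.fg_iff_subgroup_fg _).1 (Group.fg_of_surjective hswap)

theorem finite_image_mk_of_relIndex_ne_zero {U D : Subgroup G} (h : U.relIndex D ≠ 0) :
    ((↑) '' (D : Set G) : Set (G ⧸ U)).Finite := by
  have : (U.subgroupOf D).FiniteIndex := ⟨h⟩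
  let f : D ⧸ U.subgroupOf D → G ⧸ U :=
    Quotient.map' Subtype.val fun a b hab => QuotientGroup.leftRel_apply.2 <| by
      simpa [mem_subgroupOf] using QuotientGroup.leftRel_apply.1 hab
  refine (Set.finite_range f).subset ?_
  rintro _ ⟨d, hd, rfl⟩
  exact ⟨(⟨d, hd⟩ : D), rfl⟩

/-- The profinite topology of `G` induces the full profinite topology on `D`; a finite-index
subgroup of `D` is written here as `U ⊓ D` with `U.relIndex D ≠ 0`. -/
def HasFullInducedProfiniteTopology (D : Subgroup G) : Prop :=
  ∀ U : Subgroup G, U.relIndex D ≠ 0 → ∃ W : Subgroup G, W.FiniteIndex ∧ W ⊓ D ≤ U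

namespace HasFullInducedProfiniteTopology

variable {D : Subgroup G}

theorem map_of_injective (hD : D.HasFullInducedProfiniteTopology) {f : G →* H}
    (hf : Function.Injective f) (hfr : f.range.FiniteIndex) :
    (D.map f).HasFullInducedProfiniteTopology := by
  intro U hU
  obtain ⟨W, hW, hWD⟩ := hD (U.comap f) (by rwa [relIndex_comap])
  refine ⟨W.map f, ⟨?_⟩, ?_⟩
  · rw [W.index_map_of_injective hf]
    exact mul_ne_zero hW.index_ne_zero hfr.index_ne_zero
  · rw [← map_inf W D f hf]
    exact (map_mono hWD).trans (map_comap_le f U)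

theorem of_inf (K : Subgroup G) [K.FiniteIndex]
    (hDK : (D ⊓ K).HasFullInducedProfiniteTopology) : D.HasFullInducedProfiniteTopology := by
  intro U hU
  obtain ⟨W, hW, hWDK⟩ := hDK U (mt (relIndex_eq_zero_of_le_right inf_le_left) hU)
  refine ⟨W ⊓ K, inferInstance, ?_⟩
  calc W ⊓ K ⊓ D = W ⊓ (D ⊓ K) := by rw [inf_assoc, inf_comm K]
    _ ≤ U := hWDK

end HasFullInducedProfiniteTopology

end Subgroup

theorem MonoidHom.perm_apply_eq_smul_of_mem_closure {G X : Type*} [Group G] [MulAction G X]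
    {Y Z : Set X} (ρ : G →* Equiv.Perm Y) {T : Set G} (hZY : Z ⊆ Y)
    (hZ : ∀ g ∈ Subgroup.closure T, ∀ z ∈ Z, g • z ∈ Z)
    (hT : ∀ t ∈ T, ∀ y : Y, (y : X) ∈ Z → (ρ t y : X) = t • (y : X))
    {g : G} (hg : g ∈ Subgroup.closure T) (y : Y) (hy : (y : X) ∈ Z) :
    (ρ g y : X) = g • (y : X) := by
  induction hg using Subgroup.closure_induction generalizing y with
  | mem t ht => exact hT t ht y hy
  | one => simp
  | mul g₁ g₂ _ hg₂ ih₁ ih₂ =>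
    rw [map_mul, Equiv.Perm.mul_apply, ih₁ _ (by rw [ih₂ y hy]; exact hZ g₂ hg₂ _ hy), ih₂ y hy,
      mul_smul]
  | inv g hg ih =>
    have hgy : g⁻¹ • (y : X) ∈ Z := hZ _ (inv_mem hg) _ hy
    have : ρ g ⟨_, hZY hgy⟩ = y := Subtype.ext <| by rw [ih _ hgy, smul_inv_smul]
    rw [map_inv, Equiv.Perm.inv_eq_iff_eq.2 this.symm]

namespace FreeGroup

section PartialAction

variable {α X : Type*} [MulAction (FreeGroup α) X] (Y : Set X) [Finite Y]

open scoped Classical in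
noncomputable def partialTranslation (a : α) : Equiv.Perm Y :=
  Equiv.extendSubtype (p := fun y : Y => of a • (y : X) ∈ Y)
    (q := fun y : Y => (of a)⁻¹ • (y : X) ∈ Y)
    { toFun := fun y => ⟨⟨of a • (y : X), y.2⟩, by simp⟩
      invFun := fun y => ⟨⟨(of a)⁻¹ • (y : X), y.2⟩, by simp⟩
      left_inv := fun y => by ext; simp
      right_inv := fun y => by ext; simp }

noncomputable def partialAction : FreeGroup α →* Equiv.Perm Y := lift (partialTranslation Y)

variable {Y}

theorem partialAction_of_apply {a : α} {y : Y} (h : of a • (y : X) ∈ Y) :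
    (partialAction Y (of a) y : X) = of a • (y : X) := by
  classical
  rw [partialAction, lift_apply_of, partialTranslation,
    Equiv.extendSubtype_apply_of_mem (p := fun y : Y => of a • (y : X) ∈ Y) _ y h]
  rfl

theorem partialAction_of_inv_apply {a : α} {y : Y} (h : (of a)⁻¹ • (y : X) ∈ Y) :
    (partialAction Y (of a)⁻¹ y : X) = (of a)⁻¹ • (y : X) := by
  have : partialAction Y (of a) ⟨_, h⟩ = y := Subtype.ext <| by
    rw [partialAction_of_apply] <;> simp
  rw [_root_.map_inv, Equiv.Perm.inv_eq_iff_eq.2 this.symm]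

theorem partialAction_mk_singleton_apply {x : α × Bool} {y : Y} (h : mk [x] • (y : X) ∈ Y) :
    (partialAction Y (mk [x]) y : X) = mk [x] • (y : X) := by
  obtain ⟨a, _ | _⟩ := x
  · exact partialAction_of_inv_apply h
  · exact partialAction_of_apply h

theorem partialAction_mk_apply {l : List (α × Bool)} {y : Y}
    (h : ∀ l', l' <:+ l → mk l' • (y : X) ∈ Y) :
    (partialAction Y (mk l) y : X) = mk l • (y : X) := by
  induction l with
  | nil => simp [← one_eq_mk]
  | cons x l ih =>
    have ih := ih fun l' hl' => h l' (hl'.trans (List.suffix_cons x l))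
    have hx : mk [x] • (partialAction Y (mk l) y : X) ∈ Y := by
      rw [ih, smul_smul, mul_mk]
      exact h _ List.suffix_rfl
    rw [← List.singleton_append, ← mul_mk, _root_.map_mul, Equiv.Perm.mul_apply,
      partialAction_mk_singleton_apply hx, ih, smul_smul]

end PartialAction

open Pointwise in
theorem hasFullInducedProfiniteTopology_of_fg {α : Type*} {D : Subgroup (FreeGroup α)}
    (hD : D.FG) : D.HasFullInducedProfiniteTopology := by
  classical
  intro U hU
  obtain ⟨T, rfl⟩ := hD
  set Z : Set (FreeGroup α ⧸ U) :=
    (↑) '' (Subgroup.closure (T : Set (FreeGroup α)) : Set (FreeGroup α))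
  let P : Finset (FreeGroup α) := insert 1 (T.biUnion fun t => (t.toWord.tails.map mk).toFinset)
  set Y : Set (FreeGroup α ⧸ U) := (P : Set (FreeGroup α)) • Z
  have : Finite Y :=
    (P.finite_toSet.smul (Subgroup.finite_image_mk_of_relIndex_ne_zero hU)).to_subtype
  have hZY : Z ⊆ Y := fun z hz => by
    simpa only [one_smul] using Set.smul_mem_smul (Finset.mem_insert_self (1 : FreeGroup α) _) hz
  have hZ : ∀ g ∈ Subgroup.closure (T : Set (FreeGroup α)), ∀ z ∈ Z, g • z ∈ Z := by
    rintro g hg _ ⟨d, hd, rfl⟩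
    exact ⟨g * d, mul_mem hg hd, rfl⟩
  have hT : ∀ t ∈ (T : Set (FreeGroup α)), ∀ y : Y, (y : FreeGroup α ⧸ U) ∈ Z →
      (partialAction Y t y : FreeGroup α ⧸ U) = t • (y : FreeGroup α ⧸ U) := by
    intro t ht y hy
    have hsuffix : ∀ l', l' <:+ t.toWord → mk l' • (y : FreeGroup α ⧸ U) ∈ Y := fun l' hl' =>
      Set.smul_mem_smul (Finset.mem_insert_of_mem <| Finset.mem_biUnion.2
        ⟨t, ht, List.mem_toFinset.2 <| List.mem_map.2 ⟨l', (List.mem_tails _ _).2 hl', rfl⟩⟩) hy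
    simpa only [mk_toWord] using partialAction_mk_apply hsuffix
  refine ⟨(partialAction Y).ker, inferInstance, ?_⟩
  rintro d ⟨hker, hd⟩
  have h1 : ((1 : FreeGroup α) : FreeGroup α ⧸ U) ∈ Z := ⟨1, one_mem _, rfl⟩
  have := (partialAction Y).perm_apply_eq_smul_of_mem_closure hZY hZ hT hd ⟨_, hZY h1⟩ h1
  rw [MonoidHom.mem_ker.1 hker, Equiv.Perm.one_apply, MulAction.Quotient.smul_mk, smul_eq_mul,
    mul_one] at this
  simpa using QuotientGroup.eq.1 this

end FreeGroup

theorem IsFreeGroup.hasFullInducedProfiniteTopology_of_fg {G : Type*} [Group G] [IsFreeGroup G]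
    {D : Subgroup G} (hD : D.FG) : D.HasFullInducedProfiniteTopology := by
  let e := IsFreeGroup.toFreeGroup G
  have := (FreeGroup.hasFullInducedProfiniteTopology_of_fg (hD.map e.toMonoidHom)).map_of_injective
    (f := e.symm.toMonoidHom) e.symm.injective
    (by rw [MulEquiv.toMonoidHom_eq_coe, MulEquiv.range_eq_top]; infer_instance)
  simpa [Subgroup.map_map] using this

theorem virtuallyFree_induced_profinite_topology_general {Γ : Type*} [Group Γ]
    (Φ : Subgroup Γ) (hΦfree : IsFreeGroup Φ) (hΦf : Φ.FiniteIndex)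
    (Δ : Subgroup Γ) (hΔ : Δ.FG)
    (U : Subgroup Δ) (hUf : U.FiniteIndex) :
    ∃ V : Subgroup Γ, V.Normal ∧ V.FiniteIndex ∧ V.subgroupOf Δ ≤ U := by
  have hΔΦ : (Δ ⊓ Φ).HasFullInducedProfiniteTopology := by
    have := (IsFreeGroup.hasFullInducedProfiniteTopology_of_fg
      (hΔ.subgroupOf_of_finiteIndex Φ)).map_of_injective Φ.subtype_injective
      (by rwa [Φ.range_subtype])
    rwa [Subgroup.subgroupOf_map_subtype] at this
  obtain ⟨W, hW, hWΔ⟩ := hΔΦ.of_inf Φ (U.map Δ.subtype) <| by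
    rw [Subgroup.relIndex, Subgroup.subgroupOf,
      Subgroup.comap_map_eq_self_of_injective Δ.subtype_injective]
    exact hUf.index_ne_zero
  refine ⟨W.normalCore, inferInstance, inferInstance, fun x hx => ?_⟩
  exact (Subgroup.mem_map_iff_mem Δ.subtype_injective).1 (hWΔ ⟨W.normalCore_le hx, x.2⟩)

/-- Let `Γ` be a finitely generated group with a free normal subgroup `Φ` of finite index,
and `Δ ≤ Γ` a finitely generated subgroup. Then for every finite-index normal subgroup
`U ⊴ Δ` there is a finite-index normal subgroup `V ⊴ Γ` with `V ∩ Δ ≤ U`. -/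
theorem virtuallyFree_induced_profinite_topology {Γ : Type*} [Group Γ] [Group.FG Γ]
    (Φ : Subgroup Γ) (hΦfree : IsFreeGroup Φ) (hΦn : Φ.Normal) (hΦf : Φ.FiniteIndex)
    (Δ : Subgroup Γ) (hΔ : Δ.FG)
    (U : Subgroup Δ) (hUn : U.Normal) (hUf : U.FiniteIndex) :
    ∃ V : Subgroup Γ, V.Normal ∧ V.FiniteIndex ∧ V.subgroupOf Δ ≤ U :=
  virtuallyFree_induced_profinite_topology_general Φ hΦfree hΦf Δ hΔ U hUf
end

section
/- In an amalgamated free product G = H *_K L, the factor H is malnormal relative to K: for every g ∈ G − H there exists h ∈ H such that H ∩ g⁻¹Hg ≤ h⁻¹Kh. -/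
open Monoid CoprodI Function

namespace AmalgamAux

variable {ι : Type*} {G : ι → Type*} {K : Type*} [∀ i, Group (G i)] [Group K]
variable {φ : ∀ i, K →* G i}

open Monoid.PushoutI

def RedN (φ : ∀ i, K →* G i) {i j : ι} (w : NeWord G i j) : Prop :=
  ∀ l ∈ w.toList, l.2 ∉ (φ l.1).range

lemma redN_toWord {i j : ι} {w : NeWord G i j} (h : RedN φ w) :
    PushoutI.Reduced φ w.toWord := fun l hl => h l hl

lemma redN_inv {i j : ι} {w : NeWord G i j} (h : RedN φ w) : RedN φ w.inv := by
  induction w with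
  | singleton x hx =>
    intro l hl
    simp only [NeWord.inv, NeWord.toList, List.mem_singleton] at hl
    subst hl
    simpa using h ⟨_, x⟩ (by simp)
  | append w₁ hne w₂ ih₁ ih₂ =>
    intro l hl
    simp only [NeWord.inv, NeWord.toList, List.mem_append] at hl
    rcases hl with hl | hl
    · exact ih₂ (fun l hl => h l (by simp [hl])) l hl
    · exact ih₁ (fun l hl => h l (by simp [hl])) l hl

lemma prod_not_mem_of_range (hφ : ∀ i, Injective (φ i)) {i j k : ι}
    (w : NeWord G j k) (hred : RedN φ w) (hk : k ≠ i) :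
    PushoutI.ofCoprodI (φ := φ) w.prod ∉ (PushoutI.of (φ := φ) i).range := by
  rintro ⟨e, he⟩
  by_cases her : e ∈ (φ i).range
  · obtain ⟨y, rfl⟩ := her
    have hmem : PushoutI.ofCoprodI (φ := φ) w.toWord.prod ∈ (PushoutI.base φ).range :=
      ⟨y, (PushoutI.of_apply_eq_base φ i y).symm.trans he⟩
    have := (redN_toWord hred).eq_empty_of_mem_range hφ hmem
    exact w.toList_ne_nil (congrArg Word.toList this)
  · have he1 : e ≠ 1 := fun h => her (h ▸ one_mem _)
    have hinv : e⁻¹ ≠ 1 := by simpa using he1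
    let w' : NeWord G j i := w.append hk (NeWord.singleton e⁻¹ hinv)
    have hred' : RedN φ w' := by
      intro l hl
      simp only [w', NeWord.toList, List.mem_append, List.mem_singleton] at hl
      rcases hl with hl | hl
      · exact hred l hl
      · subst hl; simpa using her
    have hprod : PushoutI.ofCoprodI (φ := φ) w'.prod = 1 := by
      simp only [w', NeWord.append_prod, NeWord.prod_singleton, map_mul,
        PushoutI.ofCoprodI_of]
      simp [← he]
    have hmem : PushoutI.ofCoprodI (φ := φ) w'.toWord.prod ∈ (PushoutI.base φ).range := by
      rw [show w'.toWord.prod = w'.prod from rfl, hprod]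
      exact one_mem _
    have := (redN_toWord hred').eq_empty_of_mem_range hφ hmem
    exact w'.toList_ne_nil (congrArg Word.toList this)

lemma conj_not_mem (hφ : ∀ i, Injective (φ i)) {i j k : ι}
    (w : NeWord G j k) (hred : RedN φ w) (hj : j ≠ i) (hk : k ≠ i)
    {c : G i} (hc : c ∉ (φ i).range) :
    PushoutI.ofCoprodI (φ := φ) w.prod * PushoutI.of (φ := φ) i c *
      (PushoutI.ofCoprodI (φ := φ) w.prod)⁻¹ ∉ (PushoutI.of (φ := φ) i).range := by
  have hc1 : c ≠ 1 := fun h => hc (h ▸ one_mem _)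
  let u : NeWord G j j :=
    (w.append hk (NeWord.singleton c hc1)).append (Ne.symm hk) w.inv
  have hredu : RedN φ u := by
    intro l hl
    simp only [u, NeWord.toList, List.mem_append, List.mem_singleton] at hl
    rcases hl with (hl | hl) | hl
    · exact hred l hl
    · subst hl; exact hc
    · exact redN_inv hred l hl
  have hprod : PushoutI.ofCoprodI (φ := φ) u.prod =
      PushoutI.ofCoprodI (φ := φ) w.prod * PushoutI.of (φ := φ) i c *
        (PushoutI.ofCoprodI (φ := φ) w.prod)⁻¹ := by
    simp [u, NeWord.append_prod, NeWord.prod_singleton, NeWord.inv_prod, mul_assoc]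
  intro hmem
  exact prod_not_mem_of_range hφ u hredu hj (hprod ▸ hmem)



/-- Decompose a `NeWord` into its first letter and the rest. -/
lemma head_decomp {M : ι → Type*} [∀ i, Monoid (M i)] :
    ∀ {j k : ι} (v : NeWord M j k),
      (∃ _ : j = k, v.toList = [⟨j, v.head⟩] ∧ v.prod = CoprodI.of v.head) ∨
      (∃ (j' : ι) (_ : j ≠ j') (v' : NeWord M j' k),
        v.toList = ⟨j, v.head⟩ :: v'.toList ∧ v.prod = CoprodI.of v.head * v'.prod) := by
  intro j k v
  induction v with
  | singleton x hx => exact Or.inl ⟨rfl, rfl, by simp⟩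
  | append w₁ hne w₂ ih₁ ih₂ =>
    rcases ih₁ with ⟨rfl, hl, hp⟩ | ⟨j', hjj', v', hl, hp⟩
    · refine Or.inr ⟨_, hne, w₂, ?_, ?_⟩
      · simp [NeWord.toList, hl]
      · simp [NeWord.append_prod, hp]
    · refine Or.inr ⟨j', hjj', v'.append hne w₂, ?_, ?_⟩
      · simp [NeWord.toList, hl]
      · simp [NeWord.append_prod, hp, mul_assoc]

lemma redN_of_cons {j k j' : ι} {v : NeWord G j k} {v' : NeWord G j' k}
    (hl : v.toList = ⟨j, v.head⟩ :: v'.toList) (h : RedN φ v) : RedN φ v' := by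
  intro l hlmem
  exact h l (by rw [hl]; exact List.mem_cons_of_mem _ hlmem)

/-- Strip a leading `i`-letter from a reduced `NeWord`. -/
lemma strip_front (i : ι) {j k : ι} (v : NeWord G j k) (hred : RedN φ v) :
    (j = i ∧ k = i ∧ PushoutI.ofCoprodI (φ := φ) v.prod ∈ (PushoutI.of (φ := φ) i).range) ∨
    ∃ c ∈ (PushoutI.of (φ := φ) i).range, ∃ (j' : ι) (_ : j' ≠ i) (v' : NeWord G j' k),
      RedN φ v' ∧ PushoutI.ofCoprodI (φ := φ) v.prod = c * PushoutI.ofCoprodI (φ := φ) v'.prod := by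
  by_cases hj : j = i
  · subst hj
    rcases head_decomp v with ⟨rfl, hl, hp⟩ | ⟨j', hjj', v', hl, hp⟩
    · exact Or.inl ⟨rfl, rfl, v.head, by rw [hp, PushoutI.ofCoprodI_of]⟩
    · refine Or.inr ⟨PushoutI.of (φ := φ) j v.head, ⟨v.head, rfl⟩, j', Ne.symm hjj', v',
        redN_of_cons hl hred, ?_⟩
      rw [hp, map_mul, PushoutI.ofCoprodI_of]
  · exact Or.inr ⟨1, one_mem _, j, hj, v, hred, by rw [one_mul]⟩

/-- Strip a trailing `i`-letter from a reduced `NeWord` whose first index is not `i`. -/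
lemma strip_back (_hφ : ∀ i, Injective (φ i)) (i : ι) {j k : ι} (v : NeWord G j k)
    (hred : RedN φ v) (hj : j ≠ i) :
    ∃ c ∈ (PushoutI.of (φ := φ) i).range, ∃ (k' : ι) (_ : k' ≠ i) (v' : NeWord G j k'),
      RedN φ v' ∧ PushoutI.ofCoprodI (φ := φ) v.prod = PushoutI.ofCoprodI (φ := φ) v'.prod * c := by
  rcases strip_front i v.inv (redN_inv hred) with ⟨_, hji, _⟩ | ⟨c, hc, j', hj', v', hred', heq⟩
  · exact absurd hji hj
  · refine ⟨c⁻¹, inv_mem hc, j', hj', v'.inv, redN_inv hred', ?_⟩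
    have : PushoutI.ofCoprodI (φ := φ) v.prod =
        (c * PushoutI.ofCoprodI (φ := φ) v'.prod)⁻¹ := by
      rw [← heq, NeWord.inv_prod, map_inv, inv_inv]
    rw [this, mul_inv_rev, NeWord.inv_prod, map_inv]



lemma not_mem_range_of_mem_set (d : PushoutI.NormalWord.Transversal φ) {i : ι} {x : G i}
    (hx : x ∈ d.set i) (h1 : x ≠ 1) : x ∉ (φ i).range := by
  intro hr
  apply h1
  have hinj := (d.compl i).1
  have := hinj (a₁ := (⟨⟨x, hr⟩, ⟨1, d.one_mem i⟩⟩))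
    (a₂ := (⟨⟨1, one_mem _⟩, ⟨x, hx⟩⟩)) (by simp)
  have := congrArg (fun p => (p.1 : G i)) this
  simpa using this

/-- The word underlying a `NormalWord` is reduced. -/
lemma normalWord_reduced (d : PushoutI.NormalWord.Transversal φ)
    (w : PushoutI.NormalWord d) : PushoutI.Reduced φ w.toWord := by
  intro l hl
  exact not_mem_range_of_mem_set d (w.normalized l.1 l.2 hl) (w.toWord.ne_one l hl)

lemma exists_decomp (hφ : ∀ i, Injective (φ i)) (i : ι) (g : PushoutI φ)
    (hg : g ∉ (PushoutI.of (φ := φ) i).range) :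
    ∃ c₁ ∈ (PushoutI.of (φ := φ) i).range, ∃ c₂ ∈ (PushoutI.of (φ := φ) i).range,
      ∃ (j k : ι) (_ : j ≠ i) (_ : k ≠ i) (v : NeWord G j k),
        RedN φ v ∧ g = c₁ * PushoutI.ofCoprodI (φ := φ) v.prod * c₂ := by
  classical
  obtain ⟨d⟩ := PushoutI.NormalWord.transversal_nonempty φ hφ
  set W : PushoutI.NormalWord d := PushoutI.NormalWord.equiv g with hW
  have hgW : g = W.prod := (PushoutI.NormalWord.equiv.symm_apply_apply g).symm
  have hprod : W.prod = PushoutI.base φ W.head * PushoutI.ofCoprodI (φ := φ) W.toWord.prod := rfl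
  by_cases hempty : W.toWord = Word.empty
  · exact absurd ⟨φ i W.head, by
      rw [PushoutI.of_apply_eq_base φ i, hgW, hprod, hempty]; simp⟩ hg
  obtain ⟨j₀, k₀, v₀, hv₀⟩ := NeWord.of_word W.toWord hempty
  have hred₀ : RedN φ v₀ := by
    intro l hl
    have hl' : l ∈ v₀.toWord.toList := hl
    rw [hv₀] at hl'
    exact normalWord_reduced d W l hl'
  have hg0 : g = PushoutI.base φ W.head * PushoutI.ofCoprodI (φ := φ) v₀.prod := by
    rw [hgW, hprod]
    congr 2
    rw [show v₀.prod = v₀.toWord.prod from rfl, hv₀]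
  rcases strip_front i v₀ hred₀ with ⟨_, _, h⟩ | ⟨c₁, hc₁, j₁, hj₁, v₁, hred₁, heq₁⟩
  · exact absurd (by rw [hg0]; exact mul_mem ⟨φ i W.head, PushoutI.of_apply_eq_base φ i _⟩ h) hg
  obtain ⟨c₂, hc₂, k₂, hk₂, v₂, hred₂, heq₂⟩ := strip_back hφ i v₁ hred₁ hj₁
  refine ⟨PushoutI.base φ W.head * c₁,
    mul_mem ⟨φ i W.head, PushoutI.of_apply_eq_base φ i _⟩ hc₁, c₂, hc₂,
    j₁, k₂, hj₁, hk₂, v₂, hred₂, ?_⟩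
  rw [hg0, heq₁, heq₂]; group



end AmalgamAux

open Monoid

/-- In an amalgamated free product `G = H *_K L` (the pushout of two injective maps
`K →* H`, `K →* L`, with the two factors indexed by `Bool`), each factor `H` is malnormal
relative to `K`: for every `g ∈ G − H` there is `h ∈ H` with `H ∩ g⁻¹Hg ≤ h⁻¹Kh`. -/
theorem amalgam_factor_relatively_malnormal {K : Type*} [Group K] {G : Bool → Type*}
    [∀ i, Group (G i)] (φ : ∀ i, K →* G i) (hφ : ∀ i, Function.Injective (φ i)) (i : Bool)
    (g : PushoutI φ) (hg : g ∉ (PushoutI.of (φ := φ) i).range) :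
    ∃ h ∈ (PushoutI.of (φ := φ) i).range,
      (PushoutI.of (φ := φ) i).range ⊓
          ((PushoutI.of (φ := φ) i).range).map (MulAut.conj g⁻¹).toMonoidHom ≤
        ((PushoutI.base φ).range).map (MulAut.conj h⁻¹).toMonoidHom := by
  obtain ⟨c₁, hc₁, c₂, hc₂, j, k, hj, hk, v, hred, hgeq⟩ :=
    AmalgamAux.exists_decomp hφ i g hg
  refine ⟨c₂, hc₂, ?_⟩
  rintro x ⟨⟨a, ha⟩, y, ⟨b, hb⟩, hxy⟩
  -- hxy : g⁻¹ * y * g = x, so g * x * g⁻¹ = y ∈ range (of i)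
  have hyx : g * x * g⁻¹ = y := by
    have : x = g⁻¹ * y * g := by
      simpa [MulAut.conj_apply, mul_assoc] using hxy.symm
    rw [this]; group
  obtain ⟨b₂, hb₂⟩ := hc₂
  -- the conjugate of x by c₂
  set c : G i := b₂ * a * b₂⁻¹ with hc
  have hcx : c₂ * x * c₂⁻¹ = PushoutI.of (φ := φ) i c := by
    rw [hc, ← hb₂, ← ha, map_mul, map_mul, map_inv]
  obtain ⟨e₁, he₁⟩ := hc₁
  have hmem : PushoutI.ofCoprodI (φ := φ) v.prod * PushoutI.of (φ := φ) i c *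
      (PushoutI.ofCoprodI (φ := φ) v.prod)⁻¹ ∈ (PushoutI.of (φ := φ) i).range := by
    have hy' : g * x * g⁻¹ ∈ (PushoutI.of (φ := φ) i).range := by
      rw [hyx]; exact ⟨b, hb⟩
    have : g * x * g⁻¹ = c₁ * (PushoutI.ofCoprodI (φ := φ) v.prod *
        PushoutI.of (φ := φ) i c * (PushoutI.ofCoprodI (φ := φ) v.prod)⁻¹) * c₁⁻¹ := by
      rw [hgeq, ← hcx]; group
    rw [this] at hy'
    have hc1' : c₁ ∈ (PushoutI.of (φ := φ) i).range := ⟨e₁, he₁⟩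
    have h2 := mul_mem (mul_mem (inv_mem hc1') hy') hc1'
    simpa [mul_assoc] using h2
  by_cases hcr : c ∈ (φ i).range
  · obtain ⟨t, ht⟩ := hcr
    refine ⟨PushoutI.base φ t, ⟨t, rfl⟩, ?_⟩
    have hx : x = c₂⁻¹ * PushoutI.base φ t * c₂ := by
      rw [← PushoutI.of_apply_eq_base φ i t, ht, ← hcx]; group
    simp only [MulEquiv.coe_toMonoidHom, MulAut.conj_apply]
    rw [hx]; group
  · exact absurd hmem (AmalgamAux.conj_not_mem hφ v hred hj hk hcr)
end

section
/- Let Γ = H *_K L be an amalgamated free product with K finite, and let R be a ring in which |K|·1 ≠ 0. Then there exists a right derivation f : Γ → R[Γ] with Ker(f) = H, namely the unique derivation with f(h) = 0 for h ∈ H and f(l) = Σ_{k∈K} k·(l − 1) for l ∈ L. -/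
/-!
A right derivation `f : Γ → R[Γ]` is the same thing as a monoid hom `Γ → R[Γ] ⋊ Γ` lying over the
identity, so `f` comes from the universal property of the amalgam: it is `0` on `H` and the inner
derivation `y ↦ c (y - 1)`, `c = ∑_{k ∈ K} k`, on `L`; the two agree on `K` because `c k = c`.
Uniqueness holds because `H` and `L` generate `Γ`.

For the kernel, write `g ∈ Γ` in reduced form and split off the longest prefix of letters from
`H`, which `f` kills: `f g = f m` where `m` is empty (and then `g ∈ H`) or `m = y s` with
`y ∈ L`. Then `f m = c m - c s + f s`. Since `c u` is supported on the coset `K u`, `f s` on the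
cosets of the suffixes of `s`, and distinct suffixes of a reduced word lie in distinct cosets of
`K`, the coefficient of `f m` at `m` is `1 ≠ 0`.
-/

open Monoid MonoidAlgebra

noncomputable section

section RightDerivation

variable {R Γ : Type*}

def IsRightDerivation [Semiring R] [Monoid Γ] (f : Γ → R[Γ]) : Prop :=
  ∀ g h, f (g * h) = f g * single h 1 + f h

theorem IsRightDerivation.map_mul_of_eq_zero [Semiring R] [Monoid Γ] {f : Γ → R[Γ]}
    (hf : IsRightDerivation f) {g : Γ} (hg : f g = 0) (h : Γ) : f (g * h) = f h := by
  rw [hf, hg, zero_mul, zero_add]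

/-- Monoid homs `Γ →* DerivMonoid R Γ` lifting the identity of `Γ` are exactly the right
derivations `Γ → R[Γ]`. -/
@[ext]
structure DerivMonoid (R Γ : Type*) [Semiring R] [Monoid Γ] where
  fst : R[Γ]
  snd : Γ

namespace DerivMonoid

variable [Semiring R] [Monoid Γ]

instance : Mul (DerivMonoid R Γ) := ⟨fun x y => ⟨x.fst * single y.snd 1 + y.fst, x.snd * y.snd⟩⟩

instance : One (DerivMonoid R Γ) := ⟨⟨0, 1⟩⟩

@[simp] theorem fst_mul (x y : DerivMonoid R Γ) : (x * y).fst = x.fst * single y.snd 1 + y.fst :=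
  rfl

@[simp] theorem snd_mul (x y : DerivMonoid R Γ) : (x * y).snd = x.snd * y.snd := rfl

@[simp] theorem fst_one : (1 : DerivMonoid R Γ).fst = 0 := rfl

@[simp] theorem snd_one : (1 : DerivMonoid R Γ).snd = 1 := rfl

instance : Monoid (DerivMonoid R Γ) where
  mul_assoc x y z := by
    ext
    · simp only [fst_mul, snd_mul, add_mul, mul_assoc, single_mul_single, mul_one, add_assoc]
    · simp only [snd_mul, mul_assoc]
  one_mul x := by ext <;> simp
  mul_one x := by ext <;> simp [← one_def]

theorem isRightDerivation_fst {F : Γ →* DerivMonoid R Γ} (hF : ∀ g, (F g).snd = g) :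
    IsRightDerivation fun g => (F g).fst := fun g h => by
  simp only [map_mul, fst_mul, hF]

end DerivMonoid

def innerDerivHom [Ring R] [Monoid Γ] (c : R[Γ]) : Γ →* DerivMonoid R Γ where
  toFun g := ⟨c * (single g 1 - 1), g⟩
  map_one' := by ext <;> simp [← one_def]
  map_mul' g h := by
    refine DerivMonoid.ext ?_ rfl
    simp only [DerivMonoid.fst_mul, mul_sub, sub_mul, mul_assoc, single_mul_single, mul_one]
    abel

@[simp] theorem innerDerivHom_fst [Ring R] [Monoid Γ] (c : R[Γ]) (g : Γ) :
    (innerDerivHom c g).fst = c * (single g 1 - 1) := rfl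

@[simp] theorem innerDerivHom_snd [Ring R] [Monoid Γ] (c : R[Γ]) (g : Γ) :
    (innerDerivHom c g).snd = g := rfl

theorem innerDerivHom_apply_of_mul_single_eq [Ring R] [Monoid Γ] {c : R[Γ]} {g : Γ}
    (h : c * single g 1 = c) : innerDerivHom c g = innerDerivHom 0 g := by
  ext <;> simp [mul_sub, h]

end RightDerivation

section SumSingle

variable {R K Γ : Type*} [Semiring R] [Group K] [Fintype K] [Group Γ] {ι : K →* Γ}

theorem sum_single_mul_single_apply (k : K) :
    (∑ k', single (ι k') (1 : R)) * single (ι k) 1 = ∑ k', single (ι k') 1 := by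
  rw [Finset.sum_mul]
  exact Fintype.sum_equiv (Equiv.mulRight k) _ _ fun k' => by simp [single_mul_single]

theorem coeff_sum_single_one (hι : Function.Injective ι) :
    (∑ k, single (ι k) (1 : R)).coeff 1 = 1 := by
  classical
  rw [coeff_sum, Finset.sum_apply', Finset.sum_eq_single 1 (fun k _ hk => ?_) (by simp)]
  · simp [coeff_single]
  · exact Finsupp.single_eq_of_ne (by rw [← map_one ι]; exact hι.ne hk.symm)

theorem coeff_sum_single_eq_zero {g : Γ} (hg : g ∉ ι.range) :
    (∑ k, single (ι k) (1 : R)).coeff g = 0 := by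
  classical
  rw [coeff_sum, Finset.sum_apply']
  exact Finset.sum_eq_zero fun k _ => Finsupp.single_eq_of_ne (fun h => hg ⟨k, h.symm⟩)

end SumSingle

namespace Monoid.PushoutI

section Words

variable {ι K : Type*} {G : ι → Type*} [∀ i, Group (G i)] [Group K] (φ : ∀ i, K →* G i)

def prodLetters (l : List (Σ i, G i)) : PushoutI φ :=
  (l.map fun a => of a.1 a.2).prod

@[simp] theorem prodLetters_nil : prodLetters φ ([] : List (Σ i, G i)) = 1 := rfl

@[simp] theorem prodLetters_cons (a : Σ i, G i) (l : List (Σ i, G i)) :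
    prodLetters φ (a :: l) = of a.1 a.2 * prodLetters φ l :=
  List.prod_cons

theorem prodLetters_append (l₁ l₂ : List (Σ i, G i)) :
    prodLetters φ (l₁ ++ l₂) = prodLetters φ l₁ * prodLetters φ l₂ := by
  simp [prodLetters]

theorem ofCoprodI_word_prod (w : CoprodI.Word G) :
    ofCoprodI (φ := φ) w.prod = prodLetters φ w.toList := by
  simp [CoprodI.Word.prod, prodLetters, map_list_prod, Function.comp_def]

theorem prodLetters_mem_range_of {i : ι} {l : List (Σ i, G i)} (hl : ∀ a ∈ l, a.1 = i) :
    prodLetters φ l ∈ (of (φ := φ) i).range := by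
  induction l with
  | nil => exact one_mem _
  | cons a l ih =>
    obtain ⟨j, x⟩ := a
    obtain rfl : j = i := hl _ List.mem_cons_self
    exact mul_mem ⟨x, rfl⟩ (ih fun b hb => hl b (List.mem_cons_of_mem _ hb))

theorem exists_reduced_eq_base_mul (hφ : ∀ i, Function.Injective (φ i)) (g : PushoutI φ) :
    ∃ (k : K) (w : CoprodI.Word G), Reduced φ w ∧ base φ k * ofCoprodI w.prod = g := by
  classical
  obtain ⟨d⟩ := NormalWord.transversal_nonempty φ hφ
  let w : NormalWord d := g • NormalWord.empty
  refine ⟨w.head, w.toWord, fun ⟨i, x⟩ hx ⟨k, hk⟩ => w.ne_one _ hx ?_, ?_⟩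
  · -- `x` and `1` lie in the transversal and in the same coset of the base group
    have hcompl := d.compl i
    have h₁ := hcompl.equiv_snd_eq_self_of_mem_of_one_mem (one_mem _) (w.normalized i x hx)
    have h₂ := hcompl.equiv_snd_eq_one_of_mem_of_one_mem (d.one_mem i) ⟨k, hk⟩
    simpa using congrArg Subtype.val (h₁.symm.trans h₂)
  · have h := NormalWord.prod_smul g (NormalWord.empty (d := d))
    rwa [NormalWord.prod_empty, mul_one] at h

variable {φ}

theorem Reduced.prodLetters_notMem_range (hφ : ∀ i, Function.Injective (φ i))
    {w : CoprodI.Word G} (hw : Reduced φ w) {p : List (Σ i, G i)} (hp : p ≠ [])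
    (hpw : p <:+: w.toList) : prodLetters φ p ∉ (base φ).range := fun hmem => by
  have hsub : ∀ a ∈ p, a ∈ w.toList := fun a ha => hpw.sublist.subset ha
  let v : CoprodI.Word G :=
    ⟨p, fun a ha h1 => hw a (hsub a ha) (h1 ▸ one_mem _), w.chain_ne.infix hpw⟩
  have hv : Reduced φ v := fun a ha => hw a (hsub a ha)
  exact hp (congrArg CoprodI.Word.toList
    (hv.eq_empty_of_mem_range hφ (by rwa [ofCoprodI_word_prod])))

theorem Reduced.prodLetters_mul_inv_notMem_range (hφ : ∀ i, Function.Injective (φ i))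
    {w : CoprodI.Word G} (hw : Reduced φ w) {m s : List (Σ i, G i)} (hm : m <:+ w.toList)
    (hs : s <:+ m) (hsm : s ≠ m) :
    prodLetters φ m * (prodLetters φ s)⁻¹ ∉ (base φ).range := by
  obtain ⟨q, rfl⟩ := hs
  rw [prodLetters_append, mul_inv_cancel_right]
  refine hw.prodLetters_notMem_range hφ (by rintro rfl; exact hsm rfl) ?_
  obtain ⟨t, ht⟩ := hm
  exact ⟨t, s, by rw [List.append_assoc, ht]⟩

end Words

theorem rightDerivation_ext {ι K R : Type*} {G : ι → Type*} [Nonempty ι] [∀ i, Group (G i)]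
    [Group K] {φ : ∀ i, K →* G i} [Semiring R] {f f' : PushoutI φ → R[PushoutI φ]}
    (hf : IsRightDerivation f) (hf' : IsRightDerivation f')
    (h : ∀ i x, f (of i x) = f' (of i x)) : f = f' := by
  funext g
  induction g using PushoutI.induction_on with
  | of i x => exact h i x
  | base k =>
    obtain ⟨i⟩ := ‹Nonempty ι›
    rw [← of_apply_eq_base φ i, h]
  | mul x y ihx ihy => rw [hf, hf', ihx, ihy]

section AmalgamDeriv

variable {K : Type*} [Group K] [Fintype K] {G : Bool → Type*} [∀ i, Group (G i)]
  (φ : ∀ i, K →* G i) (R : Type*) [Ring R]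

def baseSum : R[PushoutI φ] :=
  ∑ k, single (base φ k) 1

def amalgamDerivHom : PushoutI φ →* DerivMonoid R (PushoutI φ) :=
  lift (fun i => (innerDerivHom (cond i 0 (baseSum φ R))).comp (of i))
    ((innerDerivHom 0).comp (base φ)) fun i => by
      rw [MonoidHom.comp_assoc, of_comp_eq_base]
      cases i
      · ext1 k
        exact innerDerivHom_apply_of_mul_single_eq (sum_single_mul_single_apply k)
      · rfl

def amalgamDeriv (g : PushoutI φ) : R[PushoutI φ] :=
  (amalgamDerivHom φ R g).fst

theorem amalgamDerivHom_snd (g : PushoutI φ) : (amalgamDerivHom φ R g).snd = g := by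
  induction g using PushoutI.induction_on with
  | of i x => simp [amalgamDerivHom]
  | base k => simp [amalgamDerivHom]
  | mul x y hx hy => rw [map_mul, DerivMonoid.snd_mul, hx, hy]

theorem isRightDerivation_amalgamDeriv : IsRightDerivation (amalgamDeriv φ R) :=
  DerivMonoid.isRightDerivation_fst (amalgamDerivHom_snd φ R)

theorem amalgamDeriv_of_true (x : G true) : amalgamDeriv φ R (of true x) = 0 := by
  simp [amalgamDeriv, amalgamDerivHom]

theorem amalgamDeriv_of_false (y : G false) :
    amalgamDeriv φ R (of false y) = baseSum φ R * (single (of false y) 1 - 1) := by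
  simp [amalgamDeriv, amalgamDerivHom]

theorem amalgamDeriv_eq_zero_of_mem_range {g : PushoutI φ} (hg : g ∈ (of (φ := φ) true).range) :
    amalgamDeriv φ R g = 0 := by
  obtain ⟨x, rfl⟩ := hg
  exact amalgamDeriv_of_true φ R x

theorem amalgamDeriv_prodLetters_cons_true (x : G true) (l : List (Σ i, G i)) :
    amalgamDeriv φ R (prodLetters φ (⟨true, x⟩ :: l)) = amalgamDeriv φ R (prodLetters φ l) :=
  (isRightDerivation_amalgamDeriv φ R).map_mul_of_eq_zero (amalgamDeriv_of_true φ R x) _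

theorem amalgamDeriv_prodLetters_cons_false (y : G false) (l : List (Σ i, G i)) :
    amalgamDeriv φ R (prodLetters φ (⟨false, y⟩ :: l)) =
      baseSum φ R * single (prodLetters φ (⟨false, y⟩ :: l)) 1 -
        baseSum φ R * single (prodLetters φ l) 1 + amalgamDeriv φ R (prodLetters φ l) := by
  rw [prodLetters_cons, isRightDerivation_amalgamDeriv, amalgamDeriv_of_false, mul_assoc,
    sub_mul, single_mul_single, one_mul, one_mul, mul_sub]

theorem coeff_baseSum_mul_single_eq_zero {g h : PushoutI φ} (hgh : h * g⁻¹ ∉ (base φ).range) :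
    (baseSum φ R * single g 1).coeff h = 0 := by
  rw [coeff_mul_single_apply, mul_one, baseSum, coeff_sum_single_eq_zero hgh]

theorem coeff_baseSum_one (hφ : ∀ i, Function.Injective (φ i)) : (baseSum φ R).coeff 1 = 1 :=
  coeff_sum_single_one (base_injective hφ)

theorem coeff_amalgamDeriv_prodLetters_eq_zero {l : List (Σ i, G i)} {h : PushoutI φ}
    (hh : ∀ s, s <:+ l → h * (prodLetters φ s)⁻¹ ∉ (base φ).range) :
    (amalgamDeriv φ R (prodLetters φ l)).coeff h = 0 := by
  induction l with
  | nil =>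
    rw [prodLetters_nil, ← map_one (of (φ := φ) true), amalgamDeriv_of_true]
    rfl
  | cons a l ih =>
    have ih' := ih fun s hs => hh s (hs.trans (List.suffix_cons a l))
    obtain ⟨_ | _, x⟩ := a
    · rw [amalgamDeriv_prodLetters_cons_false, coeff_add, coeff_sub, Finsupp.add_apply,
        Finsupp.sub_apply, coeff_baseSum_mul_single_eq_zero φ R (hh _ List.suffix_rfl),
        coeff_baseSum_mul_single_eq_zero φ R (hh _ (List.suffix_cons _ l)), ih', sub_zero,
        add_zero]
    · rwa [amalgamDeriv_prodLetters_cons_true]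

theorem Reduced.coeff_amalgamDeriv_prodLetters_self (hφ : ∀ i, Function.Injective (φ i))
    {w : CoprodI.Word G} (hw : Reduced φ w) {y : G false} {l : List (Σ i, G i)}
    (hl : ⟨false, y⟩ :: l <:+ w.toList) :
    (amalgamDeriv φ R (prodLetters φ (⟨false, y⟩ :: l))).coeff
      (prodLetters φ (⟨false, y⟩ :: l)) = 1 := by
  have hproper : ∀ s, s <:+ l → s ≠ ⟨false, y⟩ :: l := fun s hs he => by
    simpa [he] using hs.length_le
  have hy := hw.prodLetters_mul_inv_notMem_range hφ hl (List.suffix_cons _ l)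
    (hproper l List.suffix_rfl)
  have hsuffixes : ∀ s, s <:+ l → _ := fun s hs =>
    hw.prodLetters_mul_inv_notMem_range hφ hl (hs.trans (List.suffix_cons _ l)) (hproper s hs)
  rw [amalgamDeriv_prodLetters_cons_false, coeff_add, coeff_sub, Finsupp.add_apply,
    Finsupp.sub_apply, coeff_mul_single_apply, mul_inv_cancel, mul_one, coeff_baseSum_one φ R hφ,
    coeff_baseSum_mul_single_eq_zero φ R hy, coeff_amalgamDeriv_prodLetters_eq_zero φ R hsuffixes,
    sub_zero, add_zero]

theorem amalgamDeriv_eq_zero_iff [Nontrivial R] (hφ : ∀ i, Function.Injective (φ i))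
    {g : PushoutI φ} : amalgamDeriv φ R g = 0 ↔ g ∈ (of (φ := φ) true).range := by
  refine ⟨fun hg => ?_, amalgamDeriv_eq_zero_of_mem_range φ R⟩
  obtain ⟨k, w, hw, rfl⟩ := exists_reduced_eq_base_mul φ hφ g
  rw [ofCoprodI_word_prod, ← List.takeWhile_append_dropWhile (p := (·.1)) (l := w.toList),
    prodLetters_append, ← mul_assoc] at hg ⊢
  have hH : base φ k * prodLetters φ (w.toList.takeWhile (·.1)) ∈ (of (φ := φ) true).range :=
    mul_mem (of_apply_eq_base φ true k ▸ ⟨_, rfl⟩)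
      (prodLetters_mem_range_of φ fun a ha => List.mem_takeWhile_imp ha)
  rw [(isRightDerivation_amalgamDeriv φ R).map_mul_of_eq_zero
    (amalgamDeriv_eq_zero_of_mem_range φ R hH)] at hg
  refine mul_mem hH ?_
  obtain ⟨m, hm⟩ : ∃ m, w.toList.dropWhile (·.1) = m := ⟨_, rfl⟩
  have hsuffix : m <:+ w.toList := hm ▸ List.dropWhile_suffix _
  rw [hm] at hg ⊢
  rcases m with _ | ⟨⟨_ | _, y⟩, l⟩
  · exact one_mem _
  · have hcoeff := hw.coeff_amalgamDeriv_prodLetters_self φ R hφ hsuffix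
    rw [hg] at hcoeff
    simp at hcoeff
  · simpa [hm] using List.head_dropWhile_not (·.1) (l := w.toList) (by simp [hm])

end AmalgamDeriv

end Monoid.PushoutI

end

open Monoid.PushoutI in
/-- Let `Γ = H *_K L` (pushout of two injective maps from a finite `K`, the factor `H`
being indexed by `true` and `L` by `false`), and let `R` be a ring in which `|K| · 1 ≠ 0`.
Then there is a right derivation `f : Γ → R[Γ]` with kernel exactly `H`, namely the unique
derivation with `f(h) = 0` for `h ∈ H` and `f(l) = (Σ_{k ∈ K} k) · (l − 1)` for `l ∈ L`. -/
theorem amalgam_derivation_with_kernel_factor {K : Type*} [Group K] [Fintype K]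
    {G : Bool → Type*} [∀ i, Group (G i)] (φ : ∀ i, K →* G i)
    (hφ : ∀ i, Function.Injective (φ i)) (R : Type*) [Ring R]
    (hK : (Fintype.card K : R) ≠ 0) :
    ∃ f : PushoutI φ → MonoidAlgebra R (PushoutI φ),
      ((∀ g h : PushoutI φ,
          f (g * h) = f g * MonoidAlgebra.single h (1 : R) + f h) ∧
        (∀ x : G true, f (PushoutI.of (φ := φ) true x) = 0) ∧
        (∀ y : G false, f (PushoutI.of (φ := φ) false y) =
          (∑ k : K, (MonoidAlgebra.single (PushoutI.base φ k) (1 : R))) *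
            (MonoidAlgebra.single (PushoutI.of (φ := φ) false y) (1 : R) - 1))) ∧
      {g : PushoutI φ | f g = 0} = ((PushoutI.of (φ := φ) true).range : Set (PushoutI φ)) ∧
      (∀ f' : PushoutI φ → MonoidAlgebra R (PushoutI φ),
        ((∀ g h : PushoutI φ,
            f' (g * h) = f' g * MonoidAlgebra.single h (1 : R) + f' h) ∧
          (∀ x : G true, f' (PushoutI.of (φ := φ) true x) = 0) ∧
          (∀ y : G false, f' (PushoutI.of (φ := φ) false y) =
            (∑ k : K, (MonoidAlgebra.single (PushoutI.base φ k) (1 : R))) *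
              (MonoidAlgebra.single (PushoutI.of (φ := φ) false y) (1 : R) - 1))) →
        f' = f) := by
  have : Nontrivial R := nontrivial_of_ne _ _ hK
  refine ⟨amalgamDeriv φ R, ⟨isRightDerivation_amalgamDeriv φ R, amalgamDeriv_of_true φ R,
    amalgamDeriv_of_false φ R⟩, Set.ext fun g => amalgamDeriv_eq_zero_iff φ R hφ, ?_⟩
  rintro f' ⟨hder, htrue, hfalse⟩
  refine rightDerivation_ext hder (isRightDerivation_amalgamDeriv φ R) fun i x => ?_
  cases i
  · rw [hfalse, amalgamDeriv_of_false]
    rfl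
  · rw [htrue, amalgamDeriv_of_true]
end
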